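/- Let K and L be convex bodies in ℝⁿ containing the origin in their interiors. Then the following are equivalent: (i) for every unit vector ξ, {ρ_K(ξ), ρ_K(−ξ)} = {ρ_L(ξ), ρ_L(−ξ)} as unordered pairs; (ii) for every unit vector ξ, {h_K(ξ), h_K(−ξ)} = {h_L(ξ), h_L(−ξ)} as unordered pairs. -/

import Mathlib

open Set

/-- The radial function of a body `K`: `ρ_K(ξ) = sup {r > 0 : r • ξ ∈ K}`. -/
noncomputable def radial {n : ℕ} (K : Set (EuclideanSpace ℝ (Fin n)))
    (ξ : EuclideanSpace ℝ (Fin n)) : ℝ :=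
  sSup {r : ℝ | 0 < r ∧ r • ξ ∈ K}

/-- The support function of `K`: `h_K(x) = sup {⟨x, y⟩ : y ∈ K}`. -/
noncomputable def supp {n : ℕ} (K : Set (EuclideanSpace ℝ (Fin n)))
    (x : EuclideanSpace ℝ (Fin n)) : ℝ :=
  sSup ((fun y => (inner ℝ x y : ℝ)) '' K)

/-!
For convex bodies, the maximum and the minimum of `ρ_K(ξ)` and `ρ_K(-ξ)` are the radial functions
of `K ∪ -K` and `K ∩ -K`, so (i) says exactly that `K ∪ -K = L ∪ -L` and `K ∩ -K = L ∩ -L`. So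
does (ii): the maximum of `h_K(ξ)` and `h_K(-ξ)` is the support function of `K ∪ -K`, and the other
implications combine separation by hyperplanes with the preconnectedness of convex sets, which
cannot be split into two disjoint nonempty relatively open (or closed) pieces.
-/

open RealInnerProductSpace

theorem pair_eq_pair_iff_max_eq_and_min_eq {α : Type*} [LinearOrder α] {a b c d : α} :
    ({a, b} : Set α) = {c, d} ↔ max a b = max c d ∧ min a b = min c d := by
  refine ⟨fun h => ?_, fun ⟨hmax, hmin⟩ => ?_⟩
  · rcases Set.pair_eq_pair_iff.1 h with ⟨rfl, rfl⟩ | ⟨rfl, rfl⟩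
    · exact ⟨rfl, rfl⟩
    · exact ⟨max_comm _ _, min_comm _ _⟩
  · rcases le_total a b with hab | hab <;> rcases le_total c d with hcd | hcd <;>
      simp_all [Set.pair_comm]

section Neg

variable {α : Type*} [InvolutiveNeg α] {s t : Set α}

theorem union_neg_subset_union_neg (h : s ⊆ t ∪ -t) : s ∪ -s ⊆ t ∪ -t :=
  union_subset h (by simpa [Set.union_neg, Set.union_comm] using Set.neg_subset_neg.2 h)

theorem inter_neg_subset_inter_neg (h : s ∩ -s ⊆ t) : s ∩ -s ⊆ t ∩ -t :=
  subset_inter h (by simpa [Set.inter_neg, Set.inter_comm] using Set.neg_subset_neg.2 h)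

end Neg

section NormedSpace

variable {V : Type*} [NormedAddCommGroup V] [NormedSpace ℝ V]

theorem norm_inv_norm_smul_of_ne_zero {x : V} (hx : x ≠ 0) : ‖‖x‖⁻¹ • x‖ = 1 := by
  rw [norm_smul, norm_inv, norm_norm, inv_mul_cancel₀ (norm_ne_zero_iff.2 hx)]

theorem forall_norm_eq_one_iff_forall_of_homogeneous {φ ψ : V → ℝ}
    (hφ : ∀ c : ℝ, 0 ≤ c → ∀ x, φ (c • x) = c * φ x)
    (hψ : ∀ c : ℝ, 0 ≤ c → ∀ x, ψ (c • x) = c * ψ x) :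
    (∀ u : V, ‖u‖ = 1 → φ u = ψ u) ↔ ∀ x, φ x = ψ x := by
  refine ⟨fun h x => ?_, fun h u _ => h u⟩
  rcases eq_or_ne x 0 with rfl | hx
  · rw [← zero_smul ℝ (0 : V), hφ 0 le_rfl, hψ 0 le_rfl, zero_mul, zero_mul]
  · rw [← smul_inv_smul₀ (norm_ne_zero_iff.2 hx) x, hφ _ (norm_nonneg x), hψ _ (norm_nonneg x),
      h _ (norm_inv_norm_smul_of_ne_zero hx)]

def IsRadialFunction (A : Set V) (f : V → ℝ) : Prop :=
  ∀ u : V, ‖u‖ = 1 → 0 < f u ∧ ∀ r : ℝ, 0 < r → (r • u ∈ A ↔ r ≤ f u)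

namespace IsRadialFunction

variable {A B : Set V} {f g : V → ℝ}

theorem neg (hA : IsRadialFunction A f) : IsRadialFunction (-A) (fun u => f (-u)) := by
  intro u hu
  have hA' := hA (-u) (by rwa [norm_neg])
  refine ⟨hA'.1, fun r hr => ?_⟩
  rw [Set.mem_neg, ← smul_neg]
  exact hA'.2 r hr

theorem union (hA : IsRadialFunction A f) (hB : IsRadialFunction B g) :
    IsRadialFunction (A ∪ B) (fun u => max (f u) (g u)) := fun u hu =>
  ⟨lt_max_of_lt_left (hA u hu).1, fun r hr => by
    rw [Set.mem_union, (hA u hu).2 r hr, (hB u hu).2 r hr, le_max_iff]⟩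

theorem inter (hA : IsRadialFunction A f) (hB : IsRadialFunction B g) :
    IsRadialFunction (A ∩ B) (fun u => min (f u) (g u)) := fun u hu =>
  ⟨lt_min (hA u hu).1 (hB u hu).1, fun r hr => by
    rw [Set.mem_inter_iff, (hA u hu).2 r hr, (hB u hu).2 r hr, le_min_iff]⟩

theorem mem_iff (hA : IsRadialFunction A f) {x : V} (hx : x ≠ 0) :
    x ∈ A ↔ ‖x‖ ≤ f (‖x‖⁻¹ • x) := by
  have h := (hA _ (norm_inv_norm_smul_of_ne_zero hx)).2 ‖x‖ (norm_pos_iff.2 hx)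
  rwa [smul_inv_smul₀ (norm_ne_zero_iff.2 hx)] at h

theorem eq_iff (hA : IsRadialFunction A f) (hB : IsRadialFunction B g) (hA0 : 0 ∈ A)
    (hB0 : 0 ∈ B) : (∀ u : V, ‖u‖ = 1 → f u = g u) ↔ A = B := by
  constructor
  · intro h
    ext x
    rcases eq_or_ne x 0 with rfl | hx
    · simp only [hA0, hB0]
    · rw [hA.mem_iff hx, hB.mem_iff hx, h _ (norm_inv_norm_smul_of_ne_zero hx)]
  · rintro rfl u hu
    have key : ∀ {f g : V → ℝ}, IsRadialFunction A f → IsRadialFunction A g → f u ≤ g u :=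
      fun hf hg => ((hg u hu).2 _ (hf u hu).1).1 (((hf u hu).2 _ (hf u hu).1).2 le_rfl)
    exact le_antisymm (key hA hB) (key hB hA)

end IsRadialFunction

end NormedSpace

section Radial

variable {n : ℕ} {K L : Set (EuclideanSpace ℝ (Fin n))} {u : EuclideanSpace ℝ (Fin n)}

theorem bddAbove_setOf_smul_mem (hKc : IsCompact K) (hu : u ≠ 0) :
    BddAbove {r : ℝ | 0 < r ∧ r • u ∈ K} := by
  obtain ⟨C, hC⟩ := hKc.isBounded.exists_norm_le
  refine ⟨C / ‖u‖, fun r ⟨hr, hrK⟩ => ?_⟩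
  rw [le_div_iff₀ (norm_pos_iff.2 hu)]
  simpa [norm_smul, abs_of_pos hr] using hC _ hrK

theorem nonempty_setOf_smul_mem (hK0 : 0 ∈ interior K) (u : EuclideanSpace ℝ (Fin n)) :
    {r : ℝ | 0 < r ∧ r • u ∈ K}.Nonempty := by
  have hcont : Continuous fun r : ℝ => r • u := continuous_id.smul continuous_const
  have h : ∀ᶠ r in nhdsWithin (0 : ℝ) (Ioi 0), r • u ∈ K :=
    nhdsWithin_le_nhds (hcont.tendsto' 0 0 (zero_smul ℝ u) (mem_interior_iff_mem_nhds.1 hK0))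
  exact (eventually_mem_nhdsWithin.and h).exists

theorem le_radial_of_smul_mem (hKc : IsCompact K) (hu : u ≠ 0) {r : ℝ} (hr : 0 < r)
    (h : r • u ∈ K) : r ≤ radial K u :=
  le_csSup (bddAbove_setOf_smul_mem hKc hu) ⟨hr, h⟩

theorem radial_pos (hKc : IsCompact K) (hK0 : 0 ∈ interior K) (hu : u ≠ 0) : 0 < radial K u := by
  obtain ⟨r, hr, hrK⟩ := nonempty_setOf_smul_mem hK0 u
  exact hr.trans_le (le_radial_of_smul_mem hKc hu hr hrK)

theorem radial_smul_mem (hKc : IsCompact K) (hK0 : 0 ∈ interior K) (hu : u ≠ 0) :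
    radial K u • u ∈ K :=
  closure_minimal (fun _ hr => hr.2) (hKc.isClosed.preimage (continuous_id.smul continuous_const))
    (csSup_mem_closure (nonempty_setOf_smul_mem hK0 u) (bddAbove_setOf_smul_mem hKc hu))

theorem smul_mem_of_le_radial (hKc : IsCompact K) (hKv : Convex ℝ K) (hK0 : 0 ∈ interior K)
    (hu : u ≠ 0) {r : ℝ} (hr : 0 ≤ r) (h : r ≤ radial K u) : r • u ∈ K := by
  have hρ := radial_pos hKc hK0 hu
  have hmem := hKv.smul_mem_of_zero_mem (interior_subset hK0) (radial_smul_mem hKc hK0 hu)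
    ⟨div_nonneg hr hρ.le, (div_le_one hρ).2 h⟩
  rwa [smul_smul, div_mul_cancel₀ _ hρ.ne'] at hmem

theorem isRadialFunction_radial (hKc : IsCompact K) (hKv : Convex ℝ K) (hK0 : 0 ∈ interior K) :
    IsRadialFunction K (radial K) := fun u hu =>
  have hu0 : u ≠ 0 := norm_ne_zero_iff.1 (by rw [hu]; exact one_ne_zero)
  ⟨radial_pos hKc hK0 hu0, fun _ hr =>
    ⟨le_radial_of_smul_mem hKc hu0 hr, smul_mem_of_le_radial hKc hKv hK0 hu0 hr.le⟩⟩

theorem radial_pairs_eq_iff_union_neg_eq_and_inter_neg_eq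
    (hKc : IsCompact K) (hKv : Convex ℝ K) (hK0 : 0 ∈ interior K)
    (hLc : IsCompact L) (hLv : Convex ℝ L) (hL0 : 0 ∈ interior L) :
    (∀ ξ : EuclideanSpace ℝ (Fin n), ‖ξ‖ = 1 →
        ({radial K ξ, radial K (-ξ)} : Set ℝ) = {radial L ξ, radial L (-ξ)}) ↔
      K ∪ -K = L ∪ -L ∧ K ∩ -K = L ∩ -L := by
  have hK := isRadialFunction_radial hKc hKv hK0
  have hL := isRadialFunction_radial hLc hLv hL0
  have h0K : (0 : EuclideanSpace ℝ (Fin n)) ∈ K ∩ -K := by simp [interior_subset hK0]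
  have h0L : (0 : EuclideanSpace ℝ (Fin n)) ∈ L ∩ -L := by simp [interior_subset hL0]
  simp only [pair_eq_pair_iff_max_eq_and_min_eq, imp_and, forall_and]
  exact Iff.and ((hK.union hK.neg).eq_iff (hL.union hL.neg) (Or.inl h0K.1) (Or.inl h0L.1))
    ((hK.inter hK.neg).eq_iff (hL.inter hL.neg) h0K h0L)

end Radial

section Support

variable {n : ℕ} {K L : Set (EuclideanSpace ℝ (Fin n))} {v x y : EuclideanSpace ℝ (Fin n)}

theorem bddAbove_image_inner (hK : IsCompact K) (x : EuclideanSpace ℝ (Fin n)) :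
    BddAbove ((fun y => ⟪x, y⟫) '' K) :=
  (hK.image (continuous_const.inner continuous_id)).bddAbove

theorem le_supp (hK : IsCompact K) (x : EuclideanSpace ℝ (Fin n)) (hy : y ∈ K) :
    ⟪x, y⟫ ≤ supp K x :=
  le_csSup (bddAbove_image_inner hK x) (mem_image_of_mem _ hy)

theorem inner_le_supp_neg (hK : IsCompact K) (x : EuclideanSpace ℝ (Fin n)) (hy : y ∈ -K) :
    ⟪x, y⟫ ≤ supp K (-x) := by
  simpa only [inner_neg_neg, neg_neg] using le_supp hK (-x) hy

theorem supp_le (hne : K.Nonempty) {c : ℝ} (h : ∀ y ∈ K, ⟪x, y⟫ ≤ c) : supp K x ≤ c :=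
  csSup_le (hne.image _) (forall_mem_image.2 h)

theorem exists_mem_inner_eq_supp (hK : IsCompact K) (hne : K.Nonempty)
    (x : EuclideanSpace ℝ (Fin n)) : ∃ y ∈ K, ⟪x, y⟫ = supp K x :=
  (hK.image (continuous_const.inner continuous_id)).sSup_mem (hne.image _)

theorem supp_smul {c : ℝ} (hc : 0 ≤ c) (x : EuclideanSpace ℝ (Fin n)) :
    supp K (c • x) = c * supp K x := by
  rw [supp, supp, ← smul_eq_mul, ← Real.sSup_smul_of_nonneg hc, ← Set.image_smul, Set.image_image]
  simp only [real_inner_smul_left, smul_eq_mul]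

theorem supp_add_le (hK : IsCompact K) (hne : K.Nonempty) (x y : EuclideanSpace ℝ (Fin n)) :
    supp K (x + y) ≤ supp K x + supp K y :=
  supp_le hne fun z hz => by
    rw [inner_add_left]
    exact add_le_add (le_supp hK x hz) (le_supp hK y hz)

theorem supp_neg (K : Set (EuclideanSpace ℝ (Fin n))) (x : EuclideanSpace ℝ (Fin n)) :
    supp (-K) x = supp K (-x) := by
  rw [supp, supp, ← Set.image_neg_eq_neg, Set.image_image]
  simp only [inner_neg_right, inner_neg_left]

theorem supp_union (hK : IsCompact K) (hKne : K.Nonempty) (hL : IsCompact L) (hLne : L.Nonempty)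
    (x : EuclideanSpace ℝ (Fin n)) : supp (K ∪ L) x = max (supp K x) (supp L x) := by
  rw [supp, image_union]
  exact csSup_union (bddAbove_image_inner hK x) (hKne.image _) (bddAbove_image_inner hL x)
    (hLne.image _)

theorem continuous_supp (hK : IsCompact K) : Continuous (supp K) :=
  hK.continuous_sSup (continuous_fst.inner continuous_snd)

theorem max_supp_smul {c : ℝ} (hc : 0 ≤ c) (x : EuclideanSpace ℝ (Fin n)) :
    max (supp K (c • x)) (supp K (-(c • x))) = c * max (supp K x) (supp K (-x)) := by
  rw [← smul_neg, supp_smul hc, supp_smul hc, mul_max_of_nonneg _ _ hc]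

theorem min_supp_smul {c : ℝ} (hc : 0 ≤ c) (x : EuclideanSpace ℝ (Fin n)) :
    min (supp K (c • x)) (supp K (-(c • x))) = c * min (supp K x) (supp K (-x)) := by
  rw [← smul_neg, supp_smul hc, supp_smul hc, mul_min_of_nonneg _ _ hc]

theorem exists_supp_lt_inner_of_notMem (hKv : Convex ℝ K) (hKcl : IsClosed K) (hne : K.Nonempty)
    (hx : x ∉ K) : ∃ v, supp K v < ⟪v, x⟫ := by
  obtain ⟨f, c, hf, hc⟩ := geometric_hahn_banach_closed_point hKv hKcl hx
  refine ⟨(InnerProductSpace.toDual ℝ _).symm f, ?_⟩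
  rw [InnerProductSpace.toDual_symm_apply]
  refine (supp_le hne fun y hy => ?_).trans_lt hc
  rw [InnerProductSpace.toDual_symm_apply]
  exact (hf y hy).le

theorem convex_setOf_supp_lt_inner (hK : IsCompact K) (hne : K.Nonempty)
    (x : EuclideanSpace ℝ (Fin n)) : Convex ℝ {v | supp K v < ⟪v, x⟫} := by
  refine convex_iff_forall_pos.2 fun v hv w hw a b ha hb _ => ?_
  calc supp K (a • v + b • w) ≤ a * supp K v + b * supp K w := by
        rw [← supp_smul ha.le, ← supp_smul hb.le]; exact supp_add_le hK hne _ _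
    _ < a * ⟪v, x⟫ + b * ⟪w, x⟫ :=
        add_lt_add (mul_lt_mul_of_pos_left hv ha) (mul_lt_mul_of_pos_left hw hb)
    _ = ⟪a • v + b • w, x⟫ := by rw [inner_add_left, real_inner_smul_left, real_inner_smul_left]

theorem supp_neg_lt_inner_of_min_supp_lt (hK : IsCompact K)
    (hmin : min (supp K v) (supp K (-v)) = min (supp L v) (supp L (-v))) (hx : x ∈ K)
    (h : min (supp L v) (supp L (-v)) < ⟪v, x⟫) : supp K (-v) < ⟪v, x⟫ := by
  rw [← hmin, min_lt_iff] at h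
  exact h.resolve_left (le_supp hK v hx).not_gt

theorem inter_neg_subset_of_min_supp_eq (hKc : IsCompact K) (hLc : IsCompact L)
    (hLv : Convex ℝ L) (hLne : L.Nonempty)
    (hmin : ∀ v, min (supp K v) (supp K (-v)) = min (supp L v) (supp L (-v))) :
    K ∩ -K ⊆ L := by
  intro x ⟨hxK, hxK'⟩
  by_contra hxL
  obtain ⟨v, hv⟩ := exists_supp_lt_inner_of_notMem hLv hLc.isClosed hLne hxL
  exact (supp_neg_lt_inner_of_min_supp_lt hKc (hmin v) hxK ((min_le_left _ _).trans_lt hv)).not_ge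
    (inner_le_supp_neg hKc v hxK')

-- The convex set `S` of directions separating `x` from `-K` would be split into two disjoint
-- nonempty open pieces: the directions separating `x` from `L`, and those separating it from `-L`.
theorem subset_union_neg_of_supp_eq (hKc : IsCompact K) (hKne : K.Nonempty)
    (hLc : IsCompact L) (hLv : Convex ℝ L) (hLne : L.Nonempty)
    (hmax : ∀ v, max (supp K v) (supp K (-v)) = max (supp L v) (supp L (-v)))
    (hmin : ∀ v, min (supp K v) (supp K (-v)) = min (supp L v) (supp L (-v))) :
    K ⊆ L ∪ -L := by
  intro x hxK
  by_contra hx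
  rw [mem_union, not_or] at hx
  obtain ⟨v₁, hv₁⟩ := exists_supp_lt_inner_of_notMem hLv hLc.isClosed hLne hx.1
  obtain ⟨v₂, hv₂⟩ := exists_supp_lt_inner_of_notMem hLv.neg hLc.neg.isClosed hLne.neg hx.2
  rw [supp_neg] at hv₂
  set S := {v | supp (-K) v < ⟪v, x⟫}
  have hS : Convex ℝ S := convex_setOf_supp_lt_inner hKc.neg hKne.neg x
  have hmemS : ∀ v, min (supp L v) (supp L (-v)) < ⟪v, x⟫ → v ∈ S := fun v hv => by
    show supp (-K) v < _
    rw [supp_neg]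
    exact supp_neg_lt_inner_of_min_supp_lt hKc (hmin v) hxK hv
  have hinner : Continuous fun v => ⟪v, x⟫ := continuous_id.inner continuous_const
  obtain ⟨v, -, hv₁, hv₂⟩ := hS.isPreconnected
    {v | supp L v < ⟪v, x⟫} {v | supp L (-v) < ⟪v, x⟫}
    (isOpen_lt (continuous_supp hLc) hinner)
    (isOpen_lt ((continuous_supp hLc).comp continuous_neg) hinner)
    (fun v (hv : supp (-K) v < ⟪v, x⟫) => by
      have h : min (supp L v) (supp L (-v)) < ⟪v, x⟫ := by
        rw [← hmin v, ← supp_neg]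
        exact (min_le_right _ _).trans_lt hv
      exact min_lt_iff.1 h)
    ⟨v₁, hmemS v₁ ((min_le_left _ _).trans_lt hv₁), hv₁⟩
    ⟨v₂, hmemS v₂ ((min_le_right _ _).trans_lt hv₂), hv₂⟩
  have hle := (le_supp hKc v hxK).trans (le_max_left _ (supp K (-v)))
  rw [hmax] at hle
  exact hle.not_gt (max_lt hv₁ hv₂)

-- The convex set `T` is covered by the closed sets `L` and `-L` and meets both (at maximizers of
-- `±ξ` over `L`), yet avoids `L ∩ -L = K ∩ -K`.
theorem min_supp_le_supp_neg (hKc : IsCompact K) (hKv : Convex ℝ K) (hLc : IsCompact L)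
    (hLne : L.Nonempty) (hU : K ∪ -K = L ∪ -L) (hI : K ∩ -K = L ∩ -L)
    (ξ : EuclideanSpace ℝ (Fin n)) : min (supp L ξ) (supp L (-ξ)) ≤ supp K (-ξ) := by
  by_contra! h
  rw [lt_min_iff] at h
  set T := K ∩ {y | supp K (-ξ) < ⟪ξ, y⟫}
  have hT : Convex ℝ T := hKv.inter (convex_halfSpace_gt (innerₛₗ ℝ ξ).isLinear _)
  have hmemT : ∀ y ∈ L ∪ -L, supp K (-ξ) < ⟪ξ, y⟫ → y ∈ T := fun y hy hξy =>
    ⟨(hU ▸ hy : y ∈ K ∪ -K).resolve_right fun hy' => (inner_le_supp_neg hKc ξ hy').not_gt hξy,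
      hξy⟩
  obtain ⟨r, hrL, hr⟩ := exists_mem_inner_eq_supp hLc hLne ξ
  obtain ⟨q, hqL, hq⟩ := exists_mem_inner_eq_supp hLc hLne (-ξ)
  have hq' : -q ∈ -L := by rwa [Set.neg_mem_neg]
  obtain ⟨z, ⟨-, hz⟩, hzL⟩ := isPreconnected_closed_iff.1 hT.isPreconnected L (-L)
    hLc.isClosed hLc.neg.isClosed (fun y hy => hU ▸ Or.inl hy.1)
    ⟨r, hmemT r (Or.inl hrL) (hr ▸ h.1), hrL⟩
    ⟨-q, hmemT (-q) (Or.inr hq') (by rw [inner_neg_right, ← inner_neg_left, hq]; exact h.2), hq'⟩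
  rw [← hI] at hzL
  exact (inner_le_supp_neg hKc ξ hzL.2).not_gt hz

theorem min_supp_eq_of_union_neg_eq_of_inter_neg_eq (hKc : IsCompact K) (hKv : Convex ℝ K)
    (hKne : K.Nonempty) (hLc : IsCompact L) (hLv : Convex ℝ L) (hLne : L.Nonempty)
    (hU : K ∪ -K = L ∪ -L) (hI : K ∩ -K = L ∩ -L) (ξ : EuclideanSpace ℝ (Fin n)) :
    min (supp K ξ) (supp K (-ξ)) = min (supp L ξ) (supp L (-ξ)) := by
  have key : ∀ {K L : Set (EuclideanSpace ℝ (Fin n))}, IsCompact K → Convex ℝ K → IsCompact L →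
      L.Nonempty → K ∪ -K = L ∪ -L → K ∩ -K = L ∩ -L →
      min (supp L ξ) (supp L (-ξ)) ≤ min (supp K ξ) (supp K (-ξ)) := fun hKc hKv hLc hLne hU hI =>
    le_min
      (by simpa only [neg_neg, min_comm] using min_supp_le_supp_neg hKc hKv hLc hLne hU hI (-ξ))
      (min_supp_le_supp_neg hKc hKv hLc hLne hU hI ξ)
  exact le_antisymm (key hLc hLv hKc hKne hU.symm hI.symm) (key hKc hKv hLc hLne hU hI)

theorem max_supp_eq_of_union_neg_eq (hKc : IsCompact K) (hKne : K.Nonempty) (hLc : IsCompact L)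
    (hLne : L.Nonempty) (hU : K ∪ -K = L ∪ -L) (ξ : EuclideanSpace ℝ (Fin n)) :
    max (supp K ξ) (supp K (-ξ)) = max (supp L ξ) (supp L (-ξ)) := by
  rw [← supp_neg, ← supp_union hKc hKne hKc.neg hKne.neg, hU,
    supp_union hLc hLne hLc.neg hLne.neg, supp_neg]

theorem union_neg_eq_of_supp_eq (hKc : IsCompact K) (hKv : Convex ℝ K) (hKne : K.Nonempty)
    (hLc : IsCompact L) (hLv : Convex ℝ L) (hLne : L.Nonempty)
    (hmax : ∀ v, max (supp K v) (supp K (-v)) = max (supp L v) (supp L (-v)))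
    (hmin : ∀ v, min (supp K v) (supp K (-v)) = min (supp L v) (supp L (-v))) :
    K ∪ -K = L ∪ -L :=
  (union_neg_subset_union_neg
      (subset_union_neg_of_supp_eq hKc hKne hLc hLv hLne hmax hmin)).antisymm
    (union_neg_subset_union_neg (subset_union_neg_of_supp_eq hLc hLne hKc hKv hKne
      (fun v => (hmax v).symm) (fun v => (hmin v).symm)))

theorem inter_neg_eq_of_min_supp_eq (hKc : IsCompact K) (hKv : Convex ℝ K) (hKne : K.Nonempty)
    (hLc : IsCompact L) (hLv : Convex ℝ L) (hLne : L.Nonempty)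
    (hmin : ∀ v, min (supp K v) (supp K (-v)) = min (supp L v) (supp L (-v))) :
    K ∩ -K = L ∩ -L :=
  (inter_neg_subset_inter_neg (inter_neg_subset_of_min_supp_eq hKc hLc hLv hLne hmin)).antisymm
    (inter_neg_subset_inter_neg
      (inter_neg_subset_of_min_supp_eq hLc hKc hKv hKne fun v => (hmin v).symm))

theorem supp_pairs_eq_iff_union_neg_eq_and_inter_neg_eq
    (hKc : IsCompact K) (hKv : Convex ℝ K) (hKne : K.Nonempty)
    (hLc : IsCompact L) (hLv : Convex ℝ L) (hLne : L.Nonempty) :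
    (∀ ξ : EuclideanSpace ℝ (Fin n), ‖ξ‖ = 1 →
        ({supp K ξ, supp K (-ξ)} : Set ℝ) = {supp L ξ, supp L (-ξ)}) ↔
      K ∪ -K = L ∪ -L ∧ K ∩ -K = L ∩ -L := by
  simp only [pair_eq_pair_iff_max_eq_and_min_eq, imp_and, forall_and]
  rw [forall_norm_eq_one_iff_forall_of_homogeneous (fun _ hc => max_supp_smul hc)
      (fun _ hc => max_supp_smul hc),
    forall_norm_eq_one_iff_forall_of_homogeneous (fun _ hc => min_supp_smul hc)
      (fun _ hc => min_supp_smul hc)]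
  constructor
  · rintro ⟨hmax, hmin⟩
    exact ⟨union_neg_eq_of_supp_eq hKc hKv hKne hLc hLv hLne hmax hmin,
      inter_neg_eq_of_min_supp_eq hKc hKv hKne hLc hLv hLne hmin⟩
  · rintro ⟨hU, hI⟩
    exact ⟨max_supp_eq_of_union_neg_eq hKc hKne hLc hLne hU,
      min_supp_eq_of_union_neg_eq_of_inter_neg_eq hKc hKv hKne hLc hLv hLne hU hI⟩

end Support

theorem radial_pairs_eq_iff_support_pairs_eq {n : ℕ} (K L : Set (EuclideanSpace ℝ (Fin n)))
    (hKc : IsCompact K) (hKv : Convex ℝ K)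
    (hK0 : (0 : EuclideanSpace ℝ (Fin n)) ∈ interior K)
    (hLc : IsCompact L) (hLv : Convex ℝ L)
    (hL0 : (0 : EuclideanSpace ℝ (Fin n)) ∈ interior L) :
    (∀ ξ : EuclideanSpace ℝ (Fin n), ‖ξ‖ = 1 →
        ({radial K ξ, radial K (-ξ)} : Set ℝ) = {radial L ξ, radial L (-ξ)}) ↔
      (∀ ξ : EuclideanSpace ℝ (Fin n), ‖ξ‖ = 1 →
        ({supp K ξ, supp K (-ξ)} : Set ℝ) = {supp L ξ, supp L (-ξ)}) := by
  rw [radial_pairs_eq_iff_union_neg_eq_and_inter_neg_eq hKc hKv hK0 hLc hLv hL0,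
    supp_pairs_eq_iff_union_neg_eq_and_inter_neg_eq hKc hKv ⟨0, interior_subset hK0⟩ hLc hLv
      ⟨0, interior_subset hL0⟩]
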